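/- arXiv:1702.06479 — 2 statements merged into one kernel-verified Lean document; each statement's English description precedes it below -/
import Mathlib

section
/- There exists a continuous function γ : [0,b] → 𝒳 such that for every x ∈ [0,b], θ·γ(x) = x and ĥ·γ(x) = h(x) (that is, γ(x) is a minimizer in the definition of h(x)); moreover γ(0) = 0 and γ(b) = b̂. -/
/-!
Order the classes by cost per unit of workload, `ĥᵢ / θᵢ = ĥᵢ μᵢ`, breaking ties by index, and
pour workload `x` into them greedily in that order. The resulting state depends continuously on
`x` and has the threshold form of a fractional knapsack solution: for some level `l`, every class
with ratio below `l` is full and every class with ratio above `l` is empty. For such a state `γ`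
and any feasible `ξ` with the same workload,
`ĥ·ξ - ĥ·γ = ∑ᵢ (ĥᵢ - l θᵢ)(ξᵢ - γᵢ) ≥ 0`, term by term, so `γ` is a minimizer.
-/

open Finset Set

lemma max_zero_min_sub_add_max_zero_min (x T B : ℝ) (hT : 0 ≤ T) (hB : 0 ≤ B) :
    max 0 (min (x - T) B) + max 0 (min x T) = max 0 (min x (T + B)) := by
  simp only [min_def, max_def]
  split_ifs <;> linarith

lemma sum_max_zero_min_sub_sum_lt {ι α : Type*} [LinearOrder α] (key : ι → α)
    (hkey : Function.Injective key) (m : ι → ℝ) (hm : ∀ i, 0 ≤ m i) (x : ℝ) (s : Finset ι) :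
    ∑ i ∈ s, max 0 (min (x - ∑ j ∈ s with key j < key i, m j) (m i))
      = max 0 (min x (∑ i ∈ s, m i)) := by
  classical
  induction s using Finset.induction_on_max_value key with
  | empty => simp
  | insert a s ha hmax ih =>
    have hlt : ∀ j ∈ s, key j < key a := fun j hj =>
      (hmax j hj).lt_of_ne fun h => ha (hkey h ▸ hj)
    have hbelow : ∀ i ∈ s, {j ∈ insert a s | key j < key i} = {j ∈ s | key j < key i} :=
      fun i hi => by rw [filter_insert, if_neg (hlt i hi).not_gt]
    have hbelow_a : {j ∈ insert a s | key j < key a} = s := by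
      rw [filter_insert, if_neg (lt_irrefl _), filter_true_of_mem hlt]
    rw [sum_insert ha, sum_insert ha, hbelow_a,
      sum_congr rfl fun i hi => congrArg (fun t => max 0 (min (x - ∑ j ∈ t, m j) (m i)))
        (hbelow i hi), ih,
      max_zero_min_sub_add_max_zero_min x _ _ (sum_nonneg fun i _ => hm i) (hm a), add_comm (m a)]

section GreedyFill

variable {ι α : Type*} [Fintype ι] [LinearOrder α]

/-- Workload `x` poured into the classes in increasing order of `key`: class `i` receives the part
of `[0, x]` lying in `[sᵢ, sᵢ + wᵢ capᵢ]`, where `sᵢ` is the total capacity of the earlier classes,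
converted back to a number of jobs by dividing by `wᵢ`. -/
noncomputable def greedyFill (w cap : ι → ℝ) (key : ι → α) (x : ℝ) (i : ι) : ℝ :=
  max 0 (min (x - ∑ j with key j < key i, w j * cap j) (w i * cap i)) / w i

variable (w cap : ι → ℝ) (key : ι → α)

lemma continuous_greedyFill : Continuous (greedyFill w cap key) :=
  continuous_pi fun i => by
    simp only [greedyFill]
    fun_prop

variable {w cap key}

lemma greedyFill_mem_Icc {i : ι} (hw : 0 < w i) (hcap : 0 ≤ cap i) (x : ℝ) :
    greedyFill w cap key x i ∈ Icc 0 (cap i) :=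
  ⟨div_nonneg (le_max_left _ _) hw.le,
    (div_le_iff₀' hw).2 (max_le (mul_nonneg hw.le hcap) (min_le_right _ _))⟩

lemma greedyFill_of_le_sum_lt {i : ι} {x : ℝ} (hx : x ≤ ∑ j with key j < key i, w j * cap j) :
    greedyFill w cap key x i = 0 := by
  rw [greedyFill, max_eq_left ((min_le_left _ _).trans (sub_nonpos.2 hx)), zero_div]

lemma greedyFill_of_sum_lt_add_le {i : ι} (hw : 0 < w i) (hcap : 0 ≤ cap i) {x : ℝ}
    (hx : ∑ j with key j < key i, w j * cap j + w i * cap i ≤ x) :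
    greedyFill w cap key x i = cap i := by
  rw [greedyFill, min_eq_right (le_sub_iff_add_le'.2 hx),
    max_eq_right (mul_nonneg hw.le hcap), mul_div_cancel_left₀ _ hw.ne']

lemma sum_lt_add_le_sum (m : ι → ℝ) (hm : ∀ i, 0 ≤ m i) (i : ι) {s : Finset ι}
    (hs : ∀ j, key j ≤ key i → j ∈ s) :
    ∑ j with key j < key i, m j + m i ≤ ∑ j ∈ s, m j := by
  classical
  rw [add_comm, ← sum_insert (by simp)]
  refine sum_le_sum_of_subset_of_nonneg (fun j hj => hs j ?_) fun j _ _ => hm j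
  rcases mem_insert.1 hj with rfl | hj
  · exact le_rfl
  · exact (mem_filter.1 hj).2.le

lemma greedyFill_eq_of_key_lt (hw : ∀ i, 0 < w i) (hcap : ∀ i, 0 ≤ cap i) {i j : ι} {x : ℝ}
    (hij : key i < key j) (hpos : 0 < greedyFill w cap key x j) :
    greedyFill w cap key x i = cap i := by
  have hj : ∑ k with key k < key j, w k * cap k < x :=
    not_le.1 fun h => hpos.ne' (greedyFill_of_le_sum_lt h)
  refine greedyFill_of_sum_lt_add_le (hw i) (hcap i) (le_trans ?_ hj.le)
  exact sum_lt_add_le_sum _ (fun k => mul_nonneg (hw k).le (hcap k)) i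
    fun k hk => mem_filter.2 ⟨mem_univ k, hk.trans_lt hij⟩

lemma greedyFill_zero (hw : ∀ i, 0 < w i) (hcap : ∀ i, 0 ≤ cap i) :
    greedyFill w cap key 0 = 0 :=
  funext fun _ => greedyFill_of_le_sum_lt (sum_nonneg fun k _ => mul_nonneg (hw k).le (hcap k))

lemma greedyFill_sum (hw : ∀ i, 0 < w i) (hcap : ∀ i, 0 ≤ cap i) :
    greedyFill w cap key (∑ i, w i * cap i) = cap :=
  funext fun i => greedyFill_of_sum_lt_add_le (hw i) (hcap i) <|
    sum_lt_add_le_sum _ (fun k => mul_nonneg (hw k).le (hcap k)) i fun k _ => mem_univ k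

lemma sum_mul_greedyFill (hkey : Function.Injective key) (hw : ∀ i, 0 < w i)
    (hcap : ∀ i, 0 ≤ cap i) (x : ℝ) :
    ∑ i, w i * greedyFill w cap key x i = max 0 (min x (∑ i, w i * cap i)) := by
  simp only [greedyFill, mul_div_cancel₀ _ (hw _).ne']
  exact sum_max_zero_min_sub_sum_lt key hkey _ (fun i => mul_nonneg (hw i).le (hcap i)) x univ

end GreedyFill

section Threshold

variable {ι : Type*} [Fintype ι]

lemma exists_threshold_of_fill_in_order (d γ cap : ι → ℝ) (hγ : ∀ i, 0 ≤ γ i)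
    (hfill : ∀ i j, d i < d j → 0 < γ j → γ i = cap i) :
    ∃ l, (∀ i, d i < l → γ i = cap i) ∧ (∀ i, l < d i → γ i = 0) := by
  classical
  rcases (univ.filter fun j => γ j ≠ cap j).eq_empty_or_nonempty with hfull | hpartial
  · obtain ⟨l, hl⟩ := (Set.finite_range d).bddAbove
    refine ⟨l, fun i _ => ?_, fun i hi => absurd (hl (mem_range_self i)) hi.not_ge⟩
    simpa using filter_eq_empty_iff.1 hfull (mem_univ i)
  · obtain ⟨j, hj, hmin⟩ := exists_min_image _ d hpartial
    refine ⟨d j, fun i hi => ?_, fun i hi => ?_⟩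
    · by_contra hne
      exact (hmin i (by simpa using hne)).not_gt hi
    · refine ((hγ i).eq_or_lt.resolve_right fun hpos => ?_).symm
      exact (mem_filter.1 hj).2 (hfill j i hi hpos)

lemma sum_mul_le_of_threshold (w c cap γ ξ : ι → ℝ) (hw : ∀ i, 0 < w i) (l : ℝ)
    (hfull : ∀ i, c i / w i < l → γ i = cap i) (hempty : ∀ i, l < c i / w i → γ i = 0)
    (hξ : ∀ i, ξ i ∈ Icc 0 (cap i)) (hwork : ∑ i, w i * ξ i = ∑ i, w i * γ i) :
    ∑ i, c i * γ i ≤ ∑ i, c i * ξ i := by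
  have hterm : ∀ i, 0 ≤ (c i - l * w i) * (ξ i - γ i) := fun i => by
    rcases lt_trichotomy (c i / w i) l with hlt | heq | hgt
    · rw [hfull i hlt]
      rw [div_lt_iff₀ (hw i)] at hlt
      exact mul_nonneg_of_nonpos_of_nonpos (by linarith) (by linarith [(hξ i).2])
    · rw [← heq, div_mul_cancel₀ _ (hw i).ne', sub_self, zero_mul]
    · rw [hempty i hgt]
      rw [lt_div_iff₀ (hw i)] at hgt
      exact mul_nonneg (by linarith) (by linarith [(hξ i).1])
  have hsum : ∑ i, (c i - l * w i) * (ξ i - γ i)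
      = ∑ i, c i * ξ i - ∑ i, c i * γ i - l * (∑ i, w i * ξ i - ∑ i, w i * γ i) := by
    simp only [mul_sub, sub_mul, sum_sub_distrib, mul_sum, mul_assoc]
    ring
  rw [hwork, sub_self, mul_zero, sub_zero] at hsum
  linarith [Finset.sum_nonneg fun i (_ : i ∈ Finset.univ) => hterm i]

end Threshold

theorem stmt6_general (I : ℕ) (hhat mu bhat : Fin I → ℝ)
    (hmu : ∀ i, 0 < mu i) (hbhat : ∀ i, 0 < bhat i)
    (θ : Fin I → ℝ) (hθ : ∀ i, θ i = 1 / mu i)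
    (b : ℝ) (hb : b = ∑ i, θ i * bhat i)
    (h : ℝ → ℝ)
    (hdef : ∀ x ∈ Icc (0:ℝ) b, IsLeast
      {y : ℝ | ∃ ξ : Fin I → ℝ, (∀ i, ξ i ∈ Icc (0:ℝ) (bhat i)) ∧
        (∑ i, θ i * ξ i) = x ∧ y = ∑ i, hhat i * ξ i} (h x)) :
    ∃ γ : ℝ → (Fin I → ℝ), ContinuousOn γ (Icc (0:ℝ) b) ∧
      (∀ x ∈ Icc (0:ℝ) b, (∀ i, γ x i ∈ Icc (0:ℝ) (bhat i)) ∧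
        (∑ i, θ i * γ x i) = x ∧ (∑ i, hhat i * γ x i) = h x) ∧
      γ 0 = 0 ∧ γ b = bhat := by
  have hθpos : ∀ i, 0 < θ i := fun i => hθ i ▸ one_div_pos.2 (hmu i)
  have hbhat_nonneg : ∀ i, 0 ≤ bhat i := fun i => (hbhat i).le
  let key : Fin I → Lex (ℝ × Fin I) := fun i => toLex (hhat i / θ i, i)
  have hkey : Function.Injective key := fun i j hij => congrArg Prod.snd (toLex.injective hij)
  let γ := greedyFill θ bhat key
  have hfeas : ∀ x i, γ x i ∈ Icc 0 (bhat i) := fun x i =>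
    greedyFill_mem_Icc (hθpos i) (hbhat_nonneg i) x
  have hwork : ∀ x ∈ Icc 0 b, ∑ i, θ i * γ x i = x := fun x hx => by
    rw [sum_mul_greedyFill hkey hθpos hbhat_nonneg, ← hb, min_eq_left hx.2, max_eq_right hx.1]
  refine ⟨γ, (continuous_greedyFill θ bhat key).continuousOn, fun x hx => ⟨hfeas x, hwork x hx, ?_⟩,
    greedyFill_zero hθpos hbhat_nonneg, hb ▸ greedyFill_sum hθpos hbhat_nonneg⟩
  obtain ⟨l, hfull, hempty⟩ := exists_threshold_of_fill_in_order (fun i => hhat i / θ i) (γ x) bhat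
    (fun i => (hfeas x i).1) fun i j hij =>
      greedyFill_eq_of_key_lt hθpos hbhat_nonneg (Prod.Lex.toLex_lt_toLex.2 (Or.inl hij))
  obtain ⟨⟨ξ, hξ, hξx, hξcost⟩, hmin⟩ := hdef x hx
  exact le_antisymm (hξcost ▸ sum_mul_le_of_threshold θ hhat bhat (γ x) ξ hθpos l hfull hempty hξ
    (hξx.trans (hwork x hx).symm)) (hmin ⟨γ x, hfeas x, hwork x hx, rfl⟩)

/-- There exists a continuous function γ : [0,b] → 𝒳 such that for every
x ∈ [0,b], θ·γ(x) = x and ĥ·γ(x) = h(x) (γ(x) is a minimizer in the definition of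
h(x)); moreover γ(0) = 0 and γ(b) = b̂. -/
theorem stmt6 (I : ℕ) (hI : 1 ≤ I) (hhat rhat mu bhat : Fin I → ℝ)
    (hhhat : ∀ i, 0 < hhat i) (hrhat : ∀ i, 0 < rhat i)
    (hmu : ∀ i, 0 < mu i) (hbhat : ∀ i, 0 < bhat i)
    (θ : Fin I → ℝ) (hθ : ∀ i, θ i = 1 / mu i)
    (b : ℝ) (hb : b = ∑ i, θ i * bhat i)
    (h : ℝ → ℝ)
    (hdef : ∀ x ∈ Icc (0:ℝ) b, IsLeast
      {y : ℝ | ∃ ξ : Fin I → ℝ, (∀ i, ξ i ∈ Icc (0:ℝ) (bhat i)) ∧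
        (∑ i, θ i * ξ i) = x ∧ y = ∑ i, hhat i * ξ i} (h x)) :
    ∃ γ : ℝ → (Fin I → ℝ), ContinuousOn γ (Icc (0:ℝ) b) ∧
      (∀ x ∈ Icc (0:ℝ) b, (∀ i, γ x i ∈ Icc (0:ℝ) (bhat i)) ∧
        (∑ i, θ i * γ x i) = x ∧ (∑ i, hhat i * γ x i) = h x) ∧
      γ 0 = 0 ∧ γ b = bhat :=
  stmt6_general I hhat mu bhat hmu hbhat θ hθ b hb h hdef
end

section
/- Assume h is continuous. Then HJB(ε) admits at most one C² solution: if f₁ and f₂ are both C² solutions of HJB(ε), then f₁(x) = f₂(x) for every x ∈ [0,b]. -/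
/-!
Comparison principle. Suppose `f₁ - f₂` has a positive maximum at `x`. There `f₁' = f₂'` and
`f₁'' ≤ f₂''`, so the discount term `-ϱ y` makes the residual `f₂'' + H(x, f₂, f₂')` strictly
positive (the residual of `f₁` is nonnegative); hence `f₂' ∈ {0, r}` near `x`, and `f₂'` is locally
constant. Where `f₂' = 0` the difference `f₁ - f₂` is nondecreasing (as `f₁' ≥ 0`), so the maximum
propagates to the right; where `f₂' = r` it is nonincreasing (as `f₁' ≤ r`) and the maximum
propagates to the left. Since `f₂'(b) = r` and `f₂'(0) = 0`, the compact set of maximizers with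
`f₂' = 0` has no largest element and the one with `f₂' = r` no smallest, so both are empty:
a contradiction. Exchanging the roles of `f₁` and `f₂` gives equality.
-/

open Set Topology Filter

/-- The Hamiltonian H(x,y,z) = (2/σ²)(m·z + ½σ²ε·z² − ϱ·y + h(x)). -/
noncomputable def Hfun (σ ϱ m ε : ℝ) (h : ℝ → ℝ) (x y z : ℝ) : ℝ :=
  (2 / σ ^ 2) * (m * z + (1 / 2) * σ ^ 2 * ε * z ^ 2 - ϱ * y + h x)

/-- f (with first and second derivatives f', f'') is a C² solution of HJB(ε):
min{f'' + H(x,f,f'), f', r − f'} = 0 on (0,b), f'(0) = 0, f'(b) = r. -/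
def IsHJBSolution (b σ ϱ r m ε : ℝ) (h f f' f'' : ℝ → ℝ) : Prop :=
  (∀ x ∈ Icc (0:ℝ) b, HasDerivWithinAt f (f' x) (Icc (0:ℝ) b) x) ∧
  (∀ x ∈ Icc (0:ℝ) b, HasDerivWithinAt f' (f'' x) (Icc (0:ℝ) b) x) ∧
  ContinuousOn f'' (Icc (0:ℝ) b) ∧
  (∀ x ∈ Ioo (0:ℝ) b,
    min (min (f'' x + Hfun σ ϱ m ε h x (f x) (f' x)) (f' x)) (r - f' x) = 0) ∧
  f' 0 = 0 ∧ f' b = r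

lemma IsCompact.eq_empty_of_forall_exists_gt {α : Type*} [LinearOrder α] [TopologicalSpace α]
    [ClosedIciTopology α] {s : Set α} (hs : IsCompact s) (h : ∀ x ∈ s, ∃ y ∈ s, x < y) :
    s = ∅ := by
  by_contra hne
  obtain ⟨x, hx, hgreatest⟩ := hs.exists_isGreatest (nonempty_iff_ne_empty.2 hne)
  obtain ⟨y, hy, hxy⟩ := h x hx
  exact (hgreatest hy).not_gt hxy

lemma IsCompact.eq_empty_of_forall_exists_lt {α : Type*} [LinearOrder α] [TopologicalSpace α]
    [ClosedIicTopology α] {s : Set α} (hs : IsCompact s) (h : ∀ x ∈ s, ∃ y ∈ s, y < x) :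
    s = ∅ := by
  by_contra hne
  obtain ⟨x, hx, hleast⟩ := hs.exists_isLeast (nonempty_iff_ne_empty.2 hne)
  obtain ⟨y, hy, hyx⟩ := h x hx
  exact (hleast hy).not_gt hyx

lemma exists_Icc_right_of_eventually_nhdsWithin {a c x : ℝ} {P : ℝ → Prop} (hax : a ≤ x)
    (hxc : x < c) (hP : ∀ᶠ y in 𝓝[Icc a c] x, P y) : ∃ e, x < e ∧ ∀ y ∈ Icc x e, P y := by
  have hP' : ∀ᶠ y in 𝓝[Icc x c] x, P y := nhdsWithin_mono _ (Icc_subset_Icc_left hax) hP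
  rw [nhdsWithin_Icc_eq_nhdsGE hxc] at hP'
  obtain ⟨e, hxe, he⟩ := mem_nhdsGE_iff_exists_Icc_subset.1 hP'
  exact ⟨e, hxe, he⟩

lemma exists_Icc_left_of_eventually_nhdsWithin {a c x : ℝ} {P : ℝ → Prop} (hax : a < x)
    (hxc : x ≤ c) (hP : ∀ᶠ y in 𝓝[Icc a c] x, P y) : ∃ e, e < x ∧ ∀ y ∈ Icc e x, P y := by
  have hP' : ∀ᶠ y in 𝓝[Icc a x] x, P y := nhdsWithin_mono _ (Icc_subset_Icc_right hxc) hP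
  rw [nhdsWithin_Icc_eq_nhdsLE hax] at hP'
  obtain ⟨e, hex, he⟩ := mem_nhdsLE_iff_exists_Icc_subset.1 hP'
  exact ⟨e, hex, he⟩

lemma forall_hasDerivWithinAt_interior {s t : Set ℝ} {f f' : ℝ → ℝ}
    (hf : ∀ x ∈ s, HasDerivWithinAt f (f' x) s x) (hts : t ⊆ s) :
    ∀ x ∈ interior t, HasDerivWithinAt f (f' x) (interior t) x :=
  fun x hx => (hf x (hts (interior_subset hx))).mono (interior_subset.trans hts)

lemma second_deriv_nonpos_of_isMaxOn {a c x : ℝ} {g g' g'' : ℝ → ℝ} (hac : a < c)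
    (hg : ∀ y ∈ Icc a c, HasDerivWithinAt g (g' y) (Icc a c) y)
    (hg' : ∀ y ∈ Icc a c, HasDerivWithinAt g' (g'' y) (Icc a c) y)
    (hg'' : ContinuousWithinAt g'' (Icc a c) x) (hx : x ∈ Icc a c)
    (hmax : IsMaxOn g (Icc a c) x) (hcrit : g' x = 0) : g'' x ≤ 0 := by
  by_contra! hpos
  have hev : ∀ᶠ y in 𝓝[Icc a c] x, y ∈ Icc a c ∧ 0 < g'' y :=
    eventually_mem_nhdsWithin.and (hg''.eventually (lt_mem_nhds hpos))
  have hcont := HasDerivWithinAt.continuousOn hg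
  have hcont' := HasDerivWithinAt.continuousOn hg'
  rcases hx.2.lt_or_eq with hxc | rfl
  · obtain ⟨e, hxe, he⟩ := exists_Icc_right_of_eventually_nhdsWithin hx.1 hxc hev
    have hsub : Icc x e ⊆ Icc a c := fun y hy => (he y hy).1
    have hg'_mono : StrictMonoOn g' (Icc x e) :=
      strictMonoOn_of_hasDerivWithinAt_pos (convex_Icc x e) (hcont'.mono hsub)
        (forall_hasDerivWithinAt_interior hg' hsub) fun y hy => (he y (interior_subset hy)).2
    have hg_mono : StrictMonoOn g (Icc x e) :=
      strictMonoOn_of_hasDerivWithinAt_pos (convex_Icc x e) (hcont.mono hsub)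
        (forall_hasDerivWithinAt_interior hg hsub) fun y hy => by
          rw [interior_Icc] at hy
          simpa [hcrit] using hg'_mono (left_mem_Icc.2 hxe.le) (Ioo_subset_Icc_self hy) hy.1
    exact (hmax (hsub (right_mem_Icc.2 hxe.le))).not_gt
      (hg_mono (left_mem_Icc.2 hxe.le) (right_mem_Icc.2 hxe.le) hxe)
  · obtain ⟨e, hex, he⟩ := exists_Icc_left_of_eventually_nhdsWithin hac le_rfl hev
    have hsub : Icc e x ⊆ Icc a x := fun y hy => (he y hy).1
    have hg'_mono : StrictMonoOn g' (Icc e x) :=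
      strictMonoOn_of_hasDerivWithinAt_pos (convex_Icc e x) (hcont'.mono hsub)
        (forall_hasDerivWithinAt_interior hg' hsub) fun y hy => (he y (interior_subset hy)).2
    have hg_anti : StrictAntiOn g (Icc e x) :=
      strictAntiOn_of_hasDerivWithinAt_neg (convex_Icc e x) (hcont.mono hsub)
        (forall_hasDerivWithinAt_interior hg hsub) fun y hy => by
          rw [interior_Icc] at hy
          simpa [hcrit] using hg'_mono (Ioo_subset_Icc_self hy) (right_mem_Icc.2 hex.le) hy.2
    exact (hmax (hsub (left_mem_Icc.2 hex.le))).not_gt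
      (hg_anti (left_mem_Icc.2 hex.le) (right_mem_Icc.2 hex.le) hex)

noncomputable def hjbResidual (σ ϱ m ε : ℝ) (h f f' f'' : ℝ → ℝ) (x : ℝ) : ℝ :=
  f'' x + Hfun σ ϱ m ε h x (f x) (f' x)

namespace IsHJBSolution

variable {b σ ϱ r m ε : ℝ} {h f f' f'' f₁ f₁' f₁'' f₂ f₂' f₂'' : ℝ → ℝ} {x : ℝ}

lemma hasDerivWithinAt (hf : IsHJBSolution b σ ϱ r m ε h f f' f'') :
    ∀ x ∈ Icc 0 b, HasDerivWithinAt f (f' x) (Icc 0 b) x :=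
  hf.1

lemma hasDerivWithinAt_deriv (hf : IsHJBSolution b σ ϱ r m ε h f f' f'') :
    ∀ x ∈ Icc 0 b, HasDerivWithinAt f' (f'' x) (Icc 0 b) x :=
  hf.2.1

lemma continuousOn_second_deriv (hf : IsHJBSolution b σ ϱ r m ε h f f' f'') :
    ContinuousOn f'' (Icc 0 b) :=
  hf.2.2.1

lemma min_eq_zero (hf : IsHJBSolution b σ ϱ r m ε h f f' f'') (hx : x ∈ Ioo 0 b) :
    min (min (hjbResidual σ ϱ m ε h f f' f'' x) (f' x)) (r - f' x) = 0 :=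
  hf.2.2.2.1 x hx

lemma deriv_zero (hf : IsHJBSolution b σ ϱ r m ε h f f' f'') : f' 0 = 0 :=
  hf.2.2.2.2.1

lemma deriv_right_end (hf : IsHJBSolution b σ ϱ r m ε h f f' f'') : f' b = r :=
  hf.2.2.2.2.2

lemma continuousOn (hf : IsHJBSolution b σ ϱ r m ε h f f' f'') : ContinuousOn f (Icc 0 b) :=
  HasDerivWithinAt.continuousOn hf.hasDerivWithinAt

lemma continuousOn_deriv (hf : IsHJBSolution b σ ϱ r m ε h f f' f'') :
    ContinuousOn f' (Icc 0 b) :=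
  HasDerivWithinAt.continuousOn hf.hasDerivWithinAt_deriv

lemma nonneg_of_mem_Ioo (hf : IsHJBSolution b σ ϱ r m ε h f f' f'') (hx : x ∈ Ioo 0 b) :
    0 ≤ hjbResidual σ ϱ m ε h f f' f'' x ∧ 0 ≤ f' x ∧ f' x ≤ r := by
  have := (hf.min_eq_zero hx).ge
  simp only [le_min_iff, sub_nonneg] at this
  exact ⟨this.1.1, this.1.2, this.2⟩

lemma deriv_mem_Icc (hr : 0 ≤ r) (hf : IsHJBSolution b σ ϱ r m ε h f f' f'')
    (hx : x ∈ Icc 0 b) : f' x ∈ Icc 0 r := by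
  rcases hx.1.eq_or_lt with rfl | h0
  · simp [hf.deriv_zero, hr]
  rcases hx.2.eq_or_lt with rfl | hxb
  · simp [hf.deriv_right_end, hr]
  exact (hf.nonneg_of_mem_Ioo ⟨h0, hxb⟩).2

lemma deriv_eq_zero_or_eq (hf : IsHJBSolution b σ ϱ r m ε h f f' f'') (hx : x ∈ Icc 0 b)
    (hpos : 0 < hjbResidual σ ϱ m ε h f f' f'' x) : f' x = 0 ∨ f' x = r := by
  rcases hx.1.eq_or_lt with rfl | h0
  · exact Or.inl hf.deriv_zero
  rcases hx.2.eq_or_lt with rfl | hxb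
  · exact Or.inr hf.deriv_right_end
  obtain ⟨-, hp, hq⟩ := hf.nonneg_of_mem_Ioo ⟨h0, hxb⟩
  by_contra! hne
  exact (lt_min (lt_min hpos (hp.lt_of_ne' hne.1)) (sub_pos.2 (hq.lt_of_ne hne.2))).ne'
    (hf.min_eq_zero ⟨h0, hxb⟩)

lemma continuousOn_hjbResidual (hcont : ContinuousOn h (Icc 0 b))
    (hf : IsHJBSolution b σ ϱ r m ε h f f' f'') :
    ContinuousOn (hjbResidual σ ϱ m ε h f f' f'') (Icc 0 b) := by
  have := hf.continuousOn
  have := hf.continuousOn_deriv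
  have := hf.continuousOn_second_deriv
  unfold hjbResidual Hfun
  fun_prop

lemma hjbResidual_nonneg (hb : 0 < b) (hcont : ContinuousOn h (Icc 0 b))
    (hf : IsHJBSolution b σ ϱ r m ε h f f' f'') (hx : x ∈ Icc 0 b) :
    0 ≤ hjbResidual σ ϱ m ε h f f' f'' x := by
  have hclosed := (hf.continuousOn_hjbResidual hcont).preimage_isClosed_of_isClosed
    isClosed_Icc (isClosed_Ici (a := 0))
  have hsub : closure (Ioo 0 b) ⊆ Icc 0 b ∩ hjbResidual σ ϱ m ε h f f' f'' ⁻¹' Ici 0 :=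
    closure_minimal (fun y hy => ⟨Ioo_subset_Icc_self hy, (hf.nonneg_of_mem_Ioo hy).1⟩) hclosed
  exact (hsub (by rwa [closure_Ioo hb.ne])).2

lemma eventually_deriv_eq (hr : 0 < r) (hcont : ContinuousOn h (Icc 0 b))
    (hf : IsHJBSolution b σ ϱ r m ε h f f' f'') (hx : x ∈ Icc 0 b)
    (hpos : 0 < hjbResidual σ ϱ m ε h f f' f'' x) :
    ∀ᶠ y in 𝓝[Icc 0 b] x, y ∈ Icc 0 b ∧ f' y = f' x := by
  have hres := (hf.continuousOn_hjbResidual hcont x hx).eventually (lt_mem_nhds hpos)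
  have hderiv := (hf.continuousOn_deriv x hx).eventually (Metric.ball_mem_nhds _ hr)
  -- near `x`, `f'` takes only the values `0` and `r` and moves by less than `r`
  filter_upwards [self_mem_nhdsWithin, hres, hderiv] with y hy hresy hderivy
  rw [Real.dist_eq] at hderivy
  refine ⟨hy, ?_⟩
  rcases hf.deriv_eq_zero_or_eq hy hresy with hy' | hy' <;>
    rcases hf.deriv_eq_zero_or_eq hx hpos with hx' | hx' <;>
    simp_all [abs_of_pos hr]

lemma deriv_eq_of_isMaxOn (hf₁ : IsHJBSolution b σ ϱ r m ε h f₁ f₁' f₁'')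
    (hf₂ : IsHJBSolution b σ ϱ r m ε h f₂ f₂' f₂'') (hx : x ∈ Icc 0 b)
    (hmax : IsMaxOn (fun y => f₁ y - f₂ y) (Icc 0 b) x) : f₁' x = f₂' x := by
  rcases hx.1.eq_or_lt with rfl | h0
  · rw [hf₁.deriv_zero, hf₂.deriv_zero]
  rcases hx.2.eq_or_lt with rfl | hxb
  · rw [hf₁.deriv_right_end, hf₂.deriv_right_end]
  have hnhds : Icc 0 b ∈ 𝓝 x := Icc_mem_nhds h0 hxb
  exact sub_eq_zero.1 <| (hmax.isLocalMax hnhds).hasDerivAt_eq_zero <|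
    ((hf₁.hasDerivWithinAt x hx).hasDerivAt hnhds).sub ((hf₂.hasDerivWithinAt x hx).hasDerivAt hnhds)

lemma hjbResidual_pos_of_isMaxOn (hb : 0 < b) (hσ : 0 < σ) (hϱ : 0 < ϱ)
    (hcont : ContinuousOn h (Icc 0 b)) (hf₁ : IsHJBSolution b σ ϱ r m ε h f₁ f₁' f₁'')
    (hf₂ : IsHJBSolution b σ ϱ r m ε h f₂ f₂' f₂'') (hx : x ∈ Icc 0 b)
    (hmax : IsMaxOn (fun y => f₁ y - f₂ y) (Icc 0 b) x) (hlt : f₂ x < f₁ x) :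
    0 < hjbResidual σ ϱ m ε h f₂ f₂' f₂'' x := by
  have hd := deriv_eq_of_isMaxOn hf₁ hf₂ hx hmax
  have hdd : f₁'' x - f₂'' x ≤ 0 :=
    second_deriv_nonpos_of_isMaxOn (g' := fun y => f₁' y - f₂' y)
      (g'' := fun y => f₁'' y - f₂'' y) hb (fun y hy => (hf₁.hasDerivWithinAt y hy).sub (hf₂.hasDerivWithinAt y hy))
      (fun y hy => (hf₁.hasDerivWithinAt_deriv y hy).sub (hf₂.hasDerivWithinAt_deriv y hy)) ((hf₁.continuousOn_second_deriv.sub hf₂.continuousOn_second_deriv) x hx) hx hmax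
      (sub_eq_zero.2 hd)
  have hdiff : hjbResidual σ ϱ m ε h f₁ f₁' f₁'' x - hjbResidual σ ϱ m ε h f₂ f₂' f₂'' x =
      (f₁'' x - f₂'' x) - 2 / σ ^ 2 * ϱ * (f₁ x - f₂ x) := by
    simp only [hjbResidual, Hfun, hd]
    ring
  have hdiscount : 0 < 2 / σ ^ 2 * ϱ * (f₁ x - f₂ x) := by
    have := sub_pos.2 hlt
    positivity
  linarith [hf₁.hjbResidual_nonneg hb hcont hx]

lemma exists_gt_maximizer_of_deriv_eq_zero (hr : 0 < r) (hcont : ContinuousOn h (Icc 0 b))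
    (hf₁ : IsHJBSolution b σ ϱ r m ε h f₁ f₁' f₁'')
    (hf₂ : IsHJBSolution b σ ϱ r m ε h f₂ f₂' f₂'') (hx : x ∈ Icc 0 b)
    (hmax : IsMaxOn (fun y => f₁ y - f₂ y) (Icc 0 b) x)
    (hpos : 0 < hjbResidual σ ϱ m ε h f₂ f₂' f₂'' x) (hzero : f₂' x = 0) :
    ∃ y ∈ Icc 0 b, x < y ∧ f₁ y - f₂ y = f₁ x - f₂ x ∧ f₂' y = 0 := by
  have hxb : x < b := hx.2.lt_of_ne <| by
    rintro rfl
    exact hr.ne' (hf₂.deriv_right_end.symm.trans hzero)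
  obtain ⟨e, hxe, he⟩ := exists_Icc_right_of_eventually_nhdsWithin hx.1 hxb
    (hf₂.eventually_deriv_eq hr hcont hx hpos)
  have hsub : Icc x e ⊆ Icc 0 b := fun y hy => (he y hy).1
  have hmono : MonotoneOn (fun y => f₁ y - f₂ y) (Icc x e) :=
    monotoneOn_of_hasDerivWithinAt_nonneg (convex_Icc x e)
      ((hf₁.continuousOn.sub hf₂.continuousOn).mono hsub)
      (forall_hasDerivWithinAt_interior (fun y hy => (hf₁.hasDerivWithinAt y hy).sub (hf₂.hasDerivWithinAt y hy)) hsub)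
      fun y hy => by
        rw [(he y (interior_subset hy)).2, hzero, sub_zero]
        exact (hf₁.deriv_mem_Icc hr.le (hsub (interior_subset hy))).1
  have he_mem := right_mem_Icc.2 hxe.le
  exact ⟨e, hsub he_mem, hxe,
    le_antisymm (hmax (hsub he_mem)) (hmono (left_mem_Icc.2 hxe.le) he_mem hxe.le),
    (he e he_mem).2.trans hzero⟩

lemma exists_lt_maximizer_of_deriv_eq (hr : 0 < r) (hcont : ContinuousOn h (Icc 0 b))
    (hf₁ : IsHJBSolution b σ ϱ r m ε h f₁ f₁' f₁'')
    (hf₂ : IsHJBSolution b σ ϱ r m ε h f₂ f₂' f₂'') (hx : x ∈ Icc 0 b)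
    (hmax : IsMaxOn (fun y => f₁ y - f₂ y) (Icc 0 b) x)
    (hpos : 0 < hjbResidual σ ϱ m ε h f₂ f₂' f₂'' x) (hrx : f₂' x = r) :
    ∃ y ∈ Icc 0 b, y < x ∧ f₁ y - f₂ y = f₁ x - f₂ x ∧ f₂' y = r := by
  have h0x : 0 < x := hx.1.lt_of_ne <| by
    rintro rfl
    exact hr.ne (hf₂.deriv_zero.symm.trans hrx)
  obtain ⟨e, hex, he⟩ := exists_Icc_left_of_eventually_nhdsWithin h0x hx.2
    (hf₂.eventually_deriv_eq hr hcont hx hpos)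
  have hsub : Icc e x ⊆ Icc 0 b := fun y hy => (he y hy).1
  have hanti : AntitoneOn (fun y => f₁ y - f₂ y) (Icc e x) :=
    antitoneOn_of_hasDerivWithinAt_nonpos (convex_Icc e x)
      ((hf₁.continuousOn.sub hf₂.continuousOn).mono hsub)
      (forall_hasDerivWithinAt_interior (fun y hy => (hf₁.hasDerivWithinAt y hy).sub (hf₂.hasDerivWithinAt y hy)) hsub)
      fun y hy => by
        rw [(he y (interior_subset hy)).2, hrx, sub_nonpos]
        exact (hf₁.deriv_mem_Icc hr.le (hsub (interior_subset hy))).2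
  have he_mem := left_mem_Icc.2 hex.le
  exact ⟨e, hsub he_mem, hex,
    le_antisymm (hmax (hsub he_mem)) (hanti he_mem (right_mem_Icc.2 hex.le) hex.le),
    (he e he_mem).2.trans hrx⟩

theorem le_of_isHJBSolution (hb : 0 < b) (hσ : 0 < σ) (hϱ : 0 < ϱ) (hr : 0 < r)
    (hcont : ContinuousOn h (Icc 0 b)) (hf₁ : IsHJBSolution b σ ϱ r m ε h f₁ f₁' f₁'')
    (hf₂ : IsHJBSolution b σ ϱ r m ε h f₂ f₂' f₂'') : ∀ x ∈ Icc 0 b, f₁ x ≤ f₂ x := by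
  by_contra! ⟨w, hw, hlt⟩
  set g := fun y => f₁ y - f₂ y
  have hg : ContinuousOn g (Icc 0 b) := hf₁.continuousOn.sub hf₂.continuousOn
  obtain ⟨x₀, hx₀, hmax₀⟩ := isCompact_Icc.exists_isMaxOn (nonempty_Icc.2 hb.le) hg
  have hM : 0 < g x₀ := (sub_pos.2 hlt).trans_le (hmax₀ hw)
  let maximizers (c : ℝ) : Set ℝ := Icc 0 b ∩ g ⁻¹' {g x₀} ∩ f₂' ⁻¹' {c}
  have hcompact (c : ℝ) : IsCompact (maximizers c) :=
    isCompact_Icc.of_isClosed_subset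
      ((hf₂.continuousOn_deriv.mono inter_subset_left).preimage_isClosed_of_isClosed
        (hg.preimage_isClosed_of_isClosed isClosed_Icc isClosed_singleton) isClosed_singleton)
      (inter_subset_left.trans inter_subset_left)
  have hmax {y : ℝ} (hy : y ∈ Icc 0 b) (hgy : g y = g x₀) : IsMaxOn g (Icc 0 b) y :=
    fun z hz => hgy ▸ hmax₀ hz
  have hpos {y : ℝ} (hy : y ∈ Icc 0 b) (hgy : g y = g x₀) :
      0 < hjbResidual σ ϱ m ε h f₂ f₂' f₂'' y :=
    hjbResidual_pos_of_isMaxOn hb hσ hϱ hcont hf₁ hf₂ hy (hmax hy hgy)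
      (sub_pos.1 (hgy ▸ hM : 0 < g y))
  have hempty₀ : maximizers 0 = ∅ := (hcompact 0).eq_empty_of_forall_exists_gt
    fun y ⟨⟨hy, hgy⟩, hy0⟩ => by
      obtain ⟨z, hz, hyz, hgz, hz0⟩ := exists_gt_maximizer_of_deriv_eq_zero hr hcont hf₁ hf₂ hy
        (hmax hy hgy) (hpos hy hgy) hy0
      exact ⟨z, ⟨⟨hz, hgz.trans hgy⟩, hz0⟩, hyz⟩
  have hempty_r : maximizers r = ∅ := (hcompact r).eq_empty_of_forall_exists_lt
    fun y ⟨⟨hy, hgy⟩, hyr⟩ => by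
      obtain ⟨z, hz, hzy, hgz, hzr⟩ := exists_lt_maximizer_of_deriv_eq hr hcont hf₁ hf₂ hy
        (hmax hy hgy) (hpos hy hgy) hyr
      exact ⟨z, ⟨⟨hz, hgz.trans hgy⟩, hzr⟩, hzy⟩
  rcases hf₂.deriv_eq_zero_or_eq hx₀ (hpos hx₀ rfl) with h0 | hr'
  · exact hempty₀.subset ⟨⟨hx₀, rfl⟩, h0⟩
  · exact hempty_r.subset ⟨⟨hx₀, rfl⟩, hr'⟩

end IsHJBSolution

theorem stmt8_general (b σ ϱ r m ε : ℝ) (hb : 0 < b) (hσ : 0 < σ) (hϱ : 0 < ϱ) (hr : 0 < r)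
    (h : ℝ → ℝ) (hcont : ContinuousOn h (Icc (0:ℝ) b))
    (f₁ f₁' f₁'' f₂ f₂' f₂'' : ℝ → ℝ)
    (hf₁ : IsHJBSolution b σ ϱ r m ε h f₁ f₁' f₁'')
    (hf₂ : IsHJBSolution b σ ϱ r m ε h f₂ f₂' f₂'') :
    ∀ x ∈ Icc (0:ℝ) b, f₁ x = f₂ x := fun x hx =>
  le_antisymm (hf₁.le_of_isHJBSolution hb hσ hϱ hr hcont hf₂ x hx)
    (hf₂.le_of_isHJBSolution hb hσ hϱ hr hcont hf₁ x hx)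

/-- Assume h is continuous. Then HJB(ε) admits at most one C² solution:
if f₁ and f₂ are both C² solutions of HJB(ε), then f₁ = f₂ on [0,b]. -/
theorem stmt8 (b σ ϱ r m ε : ℝ) (hb : 0 < b) (hσ : 0 < σ) (hϱ : 0 < ϱ) (hr : 0 < r)
    (hε : 0 ≤ ε) (h : ℝ → ℝ) (hcont : ContinuousOn h (Icc (0:ℝ) b))
    (f₁ f₁' f₁'' f₂ f₂' f₂'' : ℝ → ℝ)
    (hf₁ : IsHJBSolution b σ ϱ r m ε h f₁ f₁' f₁'')
    (hf₂ : IsHJBSolution b σ ϱ r m ε h f₂ f₂' f₂'') :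
    ∀ x ∈ Icc (0:ℝ) b, f₁ x = f₂ x :=
  stmt8_general b σ ϱ r m ε hb hσ hϱ hr h hcont f₁ f₁' f₁'' f₂ f₂' f₂'' hf₁ hf₂
end
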